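/- arXiv:1612.06911 — 3 statements merged into one kernel-verified Lean document; each statement's English description precedes it below -/
import Mathlib

section
/- Let A, A' be dually paired graded Hopf ℤ-algebras as above, with m_x : A → A left multiplication by x ∈ A and Δ_y : A → A adjoint to right multiplication by y ∈ A'. Then the ℤ-linear map φ : A ⊗ A' → End_ℤ(A) sending x ⊗ y to m_x ∘ Δ_y is injective. -/
open scoped TensorProduct DirectSum

/-!
Write `t ∈ A ⊗ A'` as `∑ t_{pq}` with `t_{pq} ∈ 𝒜_p ⊗ 𝒜'_q`. Since the pairing is graded,
`Δ_y` lowers degrees by `deg y`, so `φ(t_{pq})` maps `𝒜_Q` into `𝒜_{p+Q-q}` and kills it when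
`q > Q`. Take `P` minimal among the `p` with `t_{pq} ≠ 0`, then `Q` maximal among the `q` with
`t_{Pq} ≠ 0`. For `a ∈ 𝒜_Q` the degree-`P` part of `φ(t)(a)` then comes from `t_{PQ}` alone, and
as `𝒜_0 = ℤ·1` we have `⟨1,1⟩ Δ_y a = ⟨a,y⟩ 1` for `y ∈ 𝒜'_Q`, so this part is (up to the
factor `⟨1,1⟩`) the contraction of `t_{PQ}` against `⟨a, ·⟩`. If `φ(t) = 0`, all these
contractions vanish; as `𝒜_P` is free and `⟨·,·⟩ : 𝒜_Q × 𝒜'_Q → ℤ` is nondegenerate on the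
right, `t_{PQ} = 0`, contradicting the choice of `(P, Q)`.
-/

theorem TensorProduct.eq_zero_of_forall_lTensor_eq_zero {R M N ι : Type*} [CommSemiring R]
    [AddCommMonoid M] [Module R M] [Module.Free R M] [AddCommMonoid N] [Module R N]
    (g : ι → N →ₗ[R] R) (hg : ∀ y, (∀ i, g i y = 0) → y = 0) {u : M ⊗[R] N}
    (hu : ∀ i, (g i).lTensor M u = 0) : u = 0 := by
  classical
  let b := Module.Free.chooseBasis R M
  have coord_lTensor : ∀ i k (v : M ⊗[R] N), g i (equivFinsuppOfBasisLeft b v k) =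
      equivFinsuppOfBasisLeft b ((g i).lTensor M v) k := by
    intro i k v
    induction v using TensorProduct.induction_on with
    | zero => simp
    | tmul x y => simp [mul_comm]
    | add v w hv hw => simp [hv, hw]
  suffices equivFinsuppOfBasisLeft b u = 0 by simpa using this
  ext k
  exact hg _ fun i => by simp [coord_lTensor, hu]

theorem Finset.exists_min_fst_max_snd {α β : Type*} [LinearOrder α] [LinearOrder β]
    (s : Finset (α × β)) (hs : s.Nonempty) :
    ∃ a b, (a, b) ∈ s ∧ ∀ x y, (x, y) ∈ s → a ≤ x ∧ (x = a → y ≤ b) := by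
  classical
  obtain ⟨⟨a, b₀⟩, hab₀, ha⟩ := s.exists_min_image Prod.fst hs
  obtain ⟨⟨a', b⟩, hab, hb⟩ := (s.filter (·.1 = a)).exists_max_image Prod.snd
    ⟨_, mem_filter.2 ⟨hab₀, rfl⟩⟩
  obtain ⟨hmem, rfl : a' = a⟩ := mem_filter.1 hab
  exact ⟨a', b, hmem, fun x y hxy =>
    ⟨ha _ hxy, fun hx => hb (x, y) (mem_filter.2 ⟨hxy, hx⟩)⟩⟩

theorem LinearMap.eq_zero_of_forall_mem_eq_zero {ι R M N : Type*} [DecidableEq ι]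
    [Semiring R] [AddCommMonoid M] [Module R M] [AddCommMonoid N] [Module R N]
    {ℳ : ι → Submodule R M} [DirectSum.Decomposition ℳ] {f : M →ₗ[R] N}
    (hf : ∀ i, ∀ x ∈ ℳ i, f x = 0) : f = 0 := by
  rw [← LinearMap.ker_eq_top, eq_top_iff,
    ← (DirectSum.Decomposition.isInternal ℳ).submodule_iSup_eq_top]
  exact iSup_le fun i x hx => hf i x hx

namespace DirectSum

section Pairing

variable {ι R M N : Type*} [CommRing R] [AddCommGroup M] [Module R M]
  [AddCommGroup N] [Module R N] {ℳ : ι → Submodule R M} {𝒩 : ι → Submodule R N}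
  {B : M →ₗ[R] N →ₗ[R] R}

variable (ℳ 𝒩 B) in
def IsGradedPairing : Prop :=
  ∀ i j, i ≠ j → ∀ x ∈ ℳ i, ∀ y ∈ 𝒩 j, B x y = 0

theorem eq_zero_of_forall_mem_pairing_eq_zero [DecidableEq ι] [Decomposition 𝒩]
    (hnd : ∀ x, (∀ y, B x y = 0) → x = 0) {x : M} (hx : ∀ i, ∀ y ∈ 𝒩 i, B x y = 0) :
    x = 0 :=
  hnd x fun y => LinearMap.congr_fun (LinearMap.eq_zero_of_forall_mem_eq_zero (ℳ := 𝒩) hx) y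

namespace IsGradedPairing

theorem apply_decompose [DecidableEq ι] [Decomposition ℳ] (hB : IsGradedPairing ℳ 𝒩 B)
    (x : M) {i : ι} {y : N} (hy : y ∈ 𝒩 i) : B (decompose ℳ x i) y = B x y := by
  classical
  conv_rhs => rw [← sum_support_decompose ℳ x, map_sum, LinearMap.sum_apply]
  refine (Finset.sum_eq_single i (fun j _ hji => hB j i hji _ (decompose ℳ x j).2 y hy)
    fun hi => ?_).symm
  rw [DFinsupp.notMem_support_iff.mp hi, ZeroMemClass.coe_zero, map_zero, LinearMap.zero_apply]

theorem mem_of_forall_pairing_eq_zero [DecidableEq ι] [Decomposition ℳ] [Decomposition 𝒩]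
    (hB : IsGradedPairing ℳ 𝒩 B) (hnd : ∀ x, (∀ y, B x y = 0) → x = 0) {x : M} {i : ι}
    (hx : ∀ j, j ≠ i → ∀ y ∈ 𝒩 j, B x y = 0) : x ∈ ℳ i := by
  suffices x - decompose ℳ x i = 0 from sub_eq_zero.mp this ▸ (decompose ℳ x i).2
  refine eq_zero_of_forall_mem_pairing_eq_zero (𝒩 := 𝒩) hnd fun j y hy => ?_
  rw [map_sub, LinearMap.sub_apply, sub_eq_zero]
  obtain rfl | hji := eq_or_ne j i
  · exact (hB.apply_decompose x hy).symm
  · rw [hx j hji y hy, hB i j hji.symm _ (decompose ℳ x i).2 y hy]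

theorem eq_zero_of_mem_of_forall_pairing_eq_zero [DecidableEq ι] [Decomposition ℳ]
    (hB : IsGradedPairing ℳ 𝒩 B) (hnd : ∀ y, (∀ x, B x y = 0) → y = 0) {i : ι} {y : N}
    (hy : y ∈ 𝒩 i) (h : ∀ x ∈ ℳ i, B x y = 0) : y = 0 := by
  refine DirectSum.eq_zero_of_forall_mem_pairing_eq_zero (B := B.flip) (𝒩 := ℳ) hnd
    fun j x hx => ?_
  obtain rfl | hji := eq_or_ne j i
  · exact h x hx
  · exact hB j i hji x hx y hy

end IsGradedPairing

end Pairing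

section TensorProduct

variable {ι κ R M N : Type*} [DecidableEq ι] [DecidableEq κ] [CommSemiring R]
  [AddCommMonoid M] [Module R M] [AddCommMonoid N] [Module R N]
  (ℳ : ι → Submodule R M) (𝒩 : κ → Submodule R N) [Decomposition ℳ] [Decomposition 𝒩]

noncomputable def decomposeTensorProduct :
    M ⊗[R] N ≃ₗ[R] ⨁ ij : ι × κ, ℳ ij.1 ⊗[R] 𝒩 ij.2 :=
  (TensorProduct.congr (decomposeLinearEquiv ℳ) (decomposeLinearEquiv 𝒩)).trans
    (TensorProduct.directSum R R _ _)

theorem decomposeTensorProduct_symm_of (ij : ι × κ) (u : ℳ ij.1 ⊗[R] 𝒩 ij.2) :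
    (decomposeTensorProduct ℳ 𝒩).symm (of _ ij u) =
      TensorProduct.map (ℳ ij.1).subtype (𝒩 ij.2).subtype u := by
  induction u using TensorProduct.induction_on with
  | zero => simp
  | tmul x y =>
    rw [LinearEquiv.symm_apply_eq]
    simp [decomposeTensorProduct, ← lof_eq_of R]
  | add u v hu hv => simp only [map_add, hu, hv]

end TensorProduct

end DirectSum

open DirectSum

section GradedAdjoint

variable {R A A' : Type*} [CommRing R] [Ring A] [Ring A'] [Algebra R A] [Module R A']
  {𝒜 : ℕ → Submodule R A} {𝒜' : ℕ → Submodule R A'} [GradedRing 𝒜] [GradedRing 𝒜']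
  {B : A →ₗ[R] A' →ₗ[R] R} {D : A' →ₗ[R] A →ₗ[R] A}

theorem adjoint_mul_right_mem (hB : IsGradedPairing 𝒜 𝒜' B)
    (hnd : ∀ a, (∀ y, B a y = 0) → a = 0) (hD : ∀ y a z, B (D y a) z = B a (z * y))
    {p q : ℕ} {a : A} {y : A'} (ha : a ∈ 𝒜 p) (hy : y ∈ 𝒜' q) : D y a ∈ 𝒜 (p - q) :=
  hB.mem_of_forall_pairing_eq_zero hnd fun n hn z hz => by
    rw [hD]
    exact hB p (n + q) (by omega) a ha _ (SetLike.mul_mem_graded hz hy)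

theorem smul_adjoint_mul_right_of_connected (hB : IsGradedPairing 𝒜 𝒜' B)
    (hnd : ∀ a, (∀ y, B a y = 0) → a = 0) (hD : ∀ y a z, B (D y a) z = B a (z * y))
    (hconn : 𝒜 0 = Submodule.span R {1}) {p : ℕ} {a : A} {y : A'} (ha : a ∈ 𝒜 p)
    (hy : y ∈ 𝒜' p) : B 1 1 • D y a = B a y • (1 : A) := by
  have hmem := adjoint_mul_right_mem hB hnd hD ha hy
  rw [Nat.sub_self, hconn] at hmem
  obtain ⟨c, hc⟩ := Submodule.mem_span_singleton.mp hmem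
  have hBa : B a y = c * B 1 1 := by
    rw [← one_mul y, ← hD, ← hc, map_smul, LinearMap.smul_apply, smul_eq_mul]
  rw [← hc, hBa, smul_smul, mul_comm]

end GradedAdjoint

section HeisenbergAction

variable {R A A' : Type*} [CommSemiring R] [Semiring A] [AddCommMonoid A'] [Algebra R A]
  [Module R A']

noncomputable def heisenbergAction (D : A' →ₗ[R] A →ₗ[R] A) :
    A ⊗[R] A' →ₗ[R] Module.End R A :=
  TensorProduct.lift (((LinearMap.llcomp R A A A).comp (LinearMap.mul R A)).compl₂ D)

@[simp]
theorem heisenbergAction_tmul_apply (D : A' →ₗ[R] A →ₗ[R] A) (x : A) (y : A') (a : A) :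
    heisenbergAction D (x ⊗ₜ y) a = x * D y a :=
  rfl

end HeisenbergAction

section GradedHeisenbergAction

variable {R A A' : Type*} [CommRing R] [Ring A] [Ring A'] [Algebra R A] [Module R A']
  {𝒜 : ℕ → Submodule R A} {𝒜' : ℕ → Submodule R A'} [GradedRing 𝒜] [GradedRing 𝒜']
  {B : A →ₗ[R] A' →ₗ[R] R} {D : A' →ₗ[R] A →ₗ[R] A}

theorem heisenbergAction_map_subtype_apply_mem (hB : IsGradedPairing 𝒜 𝒜' B)
    (hnd : ∀ a, (∀ y, B a y = 0) → a = 0) (hD : ∀ y a z, B (D y a) z = B a (z * y))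
    {p q r : ℕ} (u : 𝒜 p ⊗[R] 𝒜' q) {a : A} (ha : a ∈ 𝒜 r) :
    heisenbergAction D (TensorProduct.map (𝒜 p).subtype (𝒜' q).subtype u) a ∈
      𝒜 (p + (r - q)) := by
  induction u using TensorProduct.induction_on with
  | zero => simp
  | tmul x y =>
    simpa using SetLike.mul_mem_graded x.2 (adjoint_mul_right_mem hB hnd hD ha y.2)
  | add u v hu hv => simpa only [map_add, LinearMap.add_apply] using add_mem hu hv

theorem smul_heisenbergAction_map_subtype_apply (hB : IsGradedPairing 𝒜 𝒜' B)
    (hnd : ∀ a, (∀ y, B a y = 0) → a = 0) (hD : ∀ y a z, B (D y a) z = B a (z * y))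
    (hconn : 𝒜 0 = Submodule.span R {1}) {p q : ℕ} (u : 𝒜 p ⊗[R] 𝒜' q) {a : A}
    (ha : a ∈ 𝒜 q) :
    B 1 1 • heisenbergAction D (TensorProduct.map (𝒜 p).subtype (𝒜' q).subtype u) a =
      TensorProduct.rid R (𝒜 p) (((B a).domRestrict (𝒜' q)).lTensor _ u) := by
  induction u using TensorProduct.induction_on with
  | zero => simp
  | tmul x y =>
    simp [← mul_smul_comm, smul_adjoint_mul_right_of_connected hB hnd hD hconn ha y.2]
  | add u v hu hv => simp only [map_add, LinearMap.add_apply, smul_add, hu, hv,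
      Submodule.coe_add]

theorem decompose_smul_heisenbergAction_apply (hB : IsGradedPairing 𝒜 𝒜' B)
    (hnd : ∀ a, (∀ y, B a y = 0) → a = 0) (hD : ∀ y a z, B (D y a) z = B a (z * y))
    (hconn : 𝒜 0 = Submodule.span R {1}) (s : ⨁ pq : ℕ × ℕ, 𝒜 pq.1 ⊗[R] 𝒜' pq.2)
    {P Q : ℕ} (hPQ : ∀ p q, s (p, q) ≠ 0 → P ≤ p ∧ (p = P → q ≤ Q)) {a : A} (ha : a ∈ 𝒜 Q) :
    (decompose 𝒜 (B 1 1 • heisenbergAction D ((decomposeTensorProduct 𝒜 𝒜').symm s) a) P :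
        A) =
      TensorProduct.rid R (𝒜 P) (((B a).domRestrict (𝒜' Q)).lTensor _ (s (P, Q))) := by
  classical
  conv_lhs => rw [← sum_support_of s]
  simp only [map_sum, LinearMap.sum_apply, Finset.smul_sum, decompose_sum,
    decomposeTensorProduct_symm_of]
  rw [DFinsupp.finsetSum_apply, AddSubmonoidClass.coe_finsetSum, Finset.sum_eq_single (P, Q)]
  · rw [smul_heisenbergAction_map_subtype_apply hB hnd hD hconn _ ha, decompose_coe, of_eq_same]
  · rintro ⟨p, q⟩ hpq hne
    obtain ⟨hPp, hQq⟩ := hPQ p q (DFinsupp.mem_support_iff.mp hpq)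
    refine decompose_of_mem_ne 𝒜 (Submodule.smul_mem _ _
      (heisenbergAction_map_subtype_apply_mem hB hnd hD _ ha)) fun h => hne ?_
    -- `p + (Q - q) = P` with truncated subtraction: `q > Q` would force `p = P`, against `hQq`.
    obtain rfl : p = P := by omega
    obtain rfl : q = Q := by omega
    rfl
  · intro hs
    rw [DFinsupp.notMem_support_iff.mp hs]
    simp

theorem heisenbergAction_injective (hB : IsGradedPairing 𝒜 𝒜' B)
    (hnd : ∀ a, (∀ y, B a y = 0) → a = 0) (hnd' : ∀ y, (∀ a, B a y = 0) → y = 0)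
    (hD : ∀ y a z, B (D y a) z = B a (z * y)) (hconn : 𝒜 0 = Submodule.span R {1})
    (hfree : ∀ n, Module.Free R (𝒜 n)) : Function.Injective (heisenbergAction D) := by
  classical
  refine (injective_iff_map_eq_zero _).mpr fun t ht => ?_
  set s := decomposeTensorProduct 𝒜 𝒜' t with hs
  suffices s = 0 by simpa [s] using this
  by_contra hs0
  obtain ⟨P, Q, hPQ, hext⟩ := Finset.exists_min_fst_max_snd s.support
    (Finset.nonempty_iff_ne_empty.mpr (mt DFinsupp.support_eq_empty.mp hs0))
  have hcontract : ∀ a : 𝒜 Q, ((B a).domRestrict (𝒜' Q)).lTensor _ (s (P, Q)) = 0 := by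
    intro a
    have h := decompose_smul_heisenbergAction_apply hB hnd hD hconn s
      (fun p q hpq => hext p q (DFinsupp.mem_support_iff.mpr hpq)) a.2
    rwa [hs, LinearEquiv.symm_apply_apply, ht, LinearMap.zero_apply, smul_zero, decompose_zero,
      DirectSum.zero_apply, ZeroMemClass.coe_zero, eq_comm, ZeroMemClass.coe_eq_zero,
      LinearEquiv.map_eq_zero_iff] at h
  have := hfree P
  refine DFinsupp.mem_support_iff.mp hPQ
    (TensorProduct.eq_zero_of_forall_lTensor_eq_zero _ (fun y hy => ?_) hcontract)
  exact Subtype.ext (hB.eq_zero_of_mem_of_forall_pairing_eq_zero hnd' y.2 fun a ha => hy ⟨a, ha⟩)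

end GradedHeisenbergAction

theorem heisenberg_double_phi_injective_general
    (A A' : Type*) [Ring A] [Ring A']
    (𝒜 : ℕ → Submodule ℤ A) (𝒜' : ℕ → Submodule ℤ A')
    [GradedRing 𝒜] [GradedRing 𝒜']
    -- connectedness
    (hconn : 𝒜 0 = Submodule.span ℤ {(1 : A)})
    -- components finitely generated and free
    (hfree : ∀ n, Module.Free ℤ (𝒜 n))
    -- the pairing, graded and perfect
    (B : A →ₗ[ℤ] A' →ₗ[ℤ] ℤ)
    (hgraded : ∀ m n, m ≠ n → ∀ a ∈ 𝒜 m, ∀ y ∈ 𝒜' n, B a y = 0)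
    (hndA : ∀ a : A, (∀ y : A', B a y = 0) → a = 0)
    (hndA' : ∀ y : A', (∀ a : A, B a y = 0) → y = 0)
    -- left multiplication `m_x` as a bilinear map
    (ML : A →ₗ[ℤ] A →ₗ[ℤ] A) (hML : ∀ x a : A, ML x a = x * a)
    -- `D y` is the adjoint of right multiplication by `y ∈ A'`
    (D : A' →ₗ[ℤ] A →ₗ[ℤ] A)
    (hD : ∀ (y : A') (a : A) (z : A'), B (D y a) z = B a (z * y)) :
    Function.Injective
      (TensorProduct.lift (((LinearMap.llcomp ℤ A A A).comp ML).compl₂ D) :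
        A ⊗[ℤ] A' →ₗ[ℤ] A →ₗ[ℤ] A) := by
  obtain rfl : ML = LinearMap.mul ℤ A := LinearMap.ext₂ hML
  exact heisenbergAction_injective hgraded hndA hndA' hD hconn hfree

theorem heisenberg_double_phi_injective
    (A A' : Type*) [Ring A] [Ring A']
    (𝒜 : ℕ → Submodule ℤ A) (𝒜' : ℕ → Submodule ℤ A')
    [GradedRing 𝒜] [GradedRing 𝒜']
    -- connectedness
    (hconn : 𝒜 0 = Submodule.span ℤ {(1 : A)})
    (hconn' : 𝒜' 0 = Submodule.span ℤ {(1 : A')})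
    -- components finitely generated and free
    (hfg : ∀ n, (𝒜 n).FG) (hfg' : ∀ n, (𝒜' n).FG)
    (hfree : ∀ n, Module.Free ℤ (𝒜 n)) (hfree' : ∀ n, Module.Free ℤ (𝒜' n))
    -- the pairing, graded and perfect
    (B : A →ₗ[ℤ] A' →ₗ[ℤ] ℤ)
    (hgraded : ∀ m n, m ≠ n → ∀ a ∈ 𝒜 m, ∀ y ∈ 𝒜' n, B a y = 0)
    (hndA : ∀ a : A, (∀ y : A', B a y = 0) → a = 0)
    (hndA' : ∀ y : A', (∀ a : A, B a y = 0) → y = 0)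
    -- left multiplication `m_x` as a bilinear map
    (ML : A →ₗ[ℤ] A →ₗ[ℤ] A) (hML : ∀ x a : A, ML x a = x * a)
    -- `D y` is the adjoint of right multiplication by `y ∈ A'`
    (D : A' →ₗ[ℤ] A →ₗ[ℤ] A)
    (hD : ∀ (y : A') (a : A) (z : A'), B (D y a) z = B a (z * y)) :
    Function.Injective
      (TensorProduct.lift (((LinearMap.llcomp ℤ A A A).comp ML).compl₂ D) :
        A ⊗[ℤ] A' →ₗ[ℤ] A →ₗ[ℤ] A) :=
  heisenberg_double_phi_injective_general A A' 𝒜 𝒜' hconn hfree B hgraded hndA hndA' ML hML D hD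
end

section
/- In a positive self-adjoint Hopf algebra A (graded connected Hopf ℤ-algebra with inner product, distinguished orthogonal basis, multiplication adjoint to comultiplication, both positive), for any primitive element p in the distinguished basis with ⟨p,p⟩ = 1, the operators M_p (multiplication by p) and D_p (adjoint of multiplication by p) satisfy [D_p, M_p] = id. -/
open scoped TensorProduct

/-!
Write `⟪x, y⟫` for the pairing. Self-adjointness expands `⟪D_p (p x), y⟫ = ⟪p x, p y⟫` along
`Δ (p y) = (p ⊗ 1 + 1 ⊗ p) Δ y`. The `1 ⊗ p` part gives `⟪p D_p x, y⟫`. The `p ⊗ 1` part gives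
`⟪x, y⟫`, because `⟪p, p u⟫ = ⟪p, p⟫⟪u, 1⟫ + ⟪p, 1⟫⟪u, p⟫ = ⟪1, u⟫`: here `⟪1, p⟫ = 0`, since
`⟪1, p⟫ = ⟪1 · 1, p⟫ = 2 ⟪1, 1⟫ ⟪1, p⟫` and `⟪1, 1⟫ = 1`. Nondegeneracy turns
`⟪D_p (p x), y⟫ = ⟪x, y⟫ + ⟪p D_p x, y⟫` into the commutator relation.
-/

lemma TensorProduct.exists_sum_range_tmul_eq {R M N : Type*} [CommSemiring R]
    [AddCommMonoid M] [AddCommMonoid N] [Module R M] [Module R N] (t : M ⊗[R] N) :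
    ∃ (k : ℕ) (u : ℕ → M) (v : ℕ → N), t = ∑ i ∈ Finset.range k, u i ⊗ₜ[R] v i := by
  obtain ⟨k, u, v, rfl⟩ := TensorProduct.exists_sum_tmul_eq t
  refine ⟨k, fun i => if h : i < k then u ⟨i, h⟩ else 0,
    fun i => if h : i < k then v ⟨i, h⟩ else 0, ?_⟩
  simp [Finset.sum_range]

def tensorPairing {R A : Type*} [CommSemiring R] [AddCommMonoid A] [Module R A]
    (B : A →ₗ[R] A →ₗ[R] R) (x y : A) : A ⊗[R] A →ₗ[R] R :=
  LinearMap.mul' R R ∘ₗ TensorProduct.map (B x) (B y)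

@[simp]
lemma tensorPairing_tmul {R A : Type*} [CommSemiring R] [AddCommMonoid A] [Module R A]
    (B : A →ₗ[R] A →ₗ[R] R) (x y u v : A) :
    tensorPairing B x y (u ⊗ₜ[R] v) = B x u * B y v := by
  simp [tensorPairing]

section Primitive

variable {R A : Type*} [CommRing R] [Ring A] [Algebra R A]
  {B : A →ₗ[R] A →ₗ[R] R} {Δ : A →ₐ[R] A ⊗[R] A} {p : A}

lemma tensorPairing_tmul_one_mul (hp : ∀ u, B p (p * u) = B 1 u) (x : A)
    (t : A ⊗[R] A) : tensorPairing B p x ((p ⊗ₜ[R] 1) * t) = tensorPairing B 1 x t := by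
  induction t with
  | zero => simp
  | tmul u v => simp [hp]
  | add a b ha hb => simp only [mul_add, map_add, ha, hb]

lemma tensorPairing_one_tmul_mul {D : A →ₗ[R] A} (hD : ∀ x y, B (D x) y = B x (p * y))
    (x y : A) (t : A ⊗[R] A) :
    tensorPairing B x y ((1 ⊗ₜ[R] p) * t) = tensorPairing B x (D y) t := by
  induction t with
  | zero => simp
  | tmul u v => simp [hD]
  | add a b ha hb => simp only [mul_add, map_add, ha, hb]

lemma pairing_mul_eq_tensorPairing_comul
    (hcompat : ∀ (z x y : A) (s : Finset ℕ) (u v : ℕ → A),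
      Δ z = ∑ i ∈ s, u i ⊗ₜ[R] v i → B (x * y) z = ∑ i ∈ s, B x (u i) * B y (v i))
    (x y z : A) : B (x * y) z = tensorPairing B x y (Δ z) := by
  obtain ⟨k, u, v, hz⟩ := TensorProduct.exists_sum_range_tmul_eq (Δ z)
  simp [hcompat z x y _ u v hz, hz]

lemma pairing_mul_primitive (hmul : ∀ x y z, B (x * y) z = tensorPairing B x y (Δ z))
    (hprim : Δ p = p ⊗ₜ[R] 1 + 1 ⊗ₜ[R] p) (x y : A) :
    B (x * y) p = B x p * B y 1 + B x 1 * B y p := by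
  simp [hmul, hprim]

lemma pairing_one_primitive (hmul : ∀ x y z, B (x * y) z = tensorPairing B x y (Δ z))
    (hprim : Δ p = p ⊗ₜ[R] 1 + 1 ⊗ₜ[R] p) (h11 : B 1 1 = 1) : B 1 p = 0 := by
  have h := pairing_mul_primitive hmul hprim 1 1
  rw [mul_one, h11] at h
  linear_combination -h

lemma pairing_primitive_mul_primitive (hmul : ∀ x y z, B (x * y) z = tensorPairing B x y (Δ z))
    (hprim : Δ p = p ⊗ₜ[R] 1 + 1 ⊗ₜ[R] p) (hsymm : ∀ x y, B x y = B y x) (h11 : B 1 1 = 1)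
    (hpp : B p p = 1) (u : A) : B p (p * u) = B 1 u := by
  rw [hsymm, pairing_mul_primitive hmul hprim, hpp, hsymm p 1,
    pairing_one_primitive hmul hprim h11, hsymm u 1]
  ring

lemma pairing_adjoint_mul_primitive (hmul : ∀ x y z, B (x * y) z = tensorPairing B x y (Δ z))
    (hprim : Δ p = p ⊗ₜ[R] 1 + 1 ⊗ₜ[R] p) (hsymm : ∀ x y, B x y = B y x) (h11 : B 1 1 = 1)
    (hpp : B p p = 1) {D : A →ₗ[R] A} (hD : ∀ x y, B (D x) y = B x (p * y)) (x y : A) :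
    B (D (p * x)) y = B x y + B (p * D x) y := by
  rw [hD, hmul, map_mul, hprim, add_mul, map_add,
    tensorPairing_tmul_one_mul (pairing_primitive_mul_primitive hmul hprim hsymm h11 hpp),
    tensorPairing_one_tmul_mul hD, ← hmul, ← hmul, one_mul]

end Primitive

theorem psh_primitive_heisenberg_relation_general
    (A : Type*) [CommRing A]
    (B : A →ₗ[ℤ] A →ₗ[ℤ] ℤ)
    (hsymm : ∀ x y, B x y = B y x)
    (hnd : ∀ x, (∀ y, B x y = 0) → x = 0)
    (Δ : A →ₐ[ℤ] A ⊗[ℤ] A)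
    -- multiplication is adjoint to comultiplication (Sweedler form)
    (hcompat : ∀ (z x y : A) (s : Finset ℕ) (u v : ℕ → A),
      Δ z = ∑ i ∈ s, u i ⊗ₜ[ℤ] v i →
      B (x * y) z = ∑ i ∈ s, B x (u i) * B y (v i))
    -- counit data
    (ε : A →ₐ[ℤ] ℤ)
    (hBone : ∀ x : A, B x 1 = ε x)
    (p : A)
    (hprim : Δ p = p ⊗ₜ[ℤ] 1 + 1 ⊗ₜ[ℤ] p)
    (hpp : B p p = 1)
    (D : A →ₗ[ℤ] A)
    (hD : ∀ x y, B (D x) y = B x (p * y)) :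
    D ∘ₗ LinearMap.mulLeft ℤ p - LinearMap.mulLeft ℤ p ∘ₗ D =
      LinearMap.id := by
  have hmul := pairing_mul_eq_tensorPairing_comul hcompat
  have h11 : B 1 1 = 1 := by rw [hBone, map_one]
  ext x
  refine sub_eq_zero.mp (hnd _ fun y => ?_)
  simp only [LinearMap.sub_apply, LinearMap.comp_apply, LinearMap.mulLeft_apply,
    LinearMap.id_apply, map_sub,
    pairing_adjoint_mul_primitive hmul hprim hsymm h11 hpp hD]
  ring

theorem psh_primitive_heisenberg_relation
    (A : Type*) [CommRing A]
    (B : A →ₗ[ℤ] A →ₗ[ℤ] ℤ)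
    (hsymm : ∀ x y, B x y = B y x)
    (hnd : ∀ x, (∀ y, B x y = 0) → x = 0)
    (Δ : A →ₐ[ℤ] A ⊗[ℤ] A)
    -- multiplication is adjoint to comultiplication (Sweedler form)
    (hcompat : ∀ (z x y : A) (s : Finset ℕ) (u v : ℕ → A),
      Δ z = ∑ i ∈ s, u i ⊗ₜ[ℤ] v i →
      B (x * y) z = ∑ i ∈ s, B x (u i) * B y (v i))
    -- counit data
    (ε : A →ₐ[ℤ] ℤ)
    (hcounit : ∀ (x : A) (s : Finset ℕ) (u v : ℕ → A),
      Δ x = ∑ i ∈ s, u i ⊗ₜ[ℤ] v i →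
      (∑ i ∈ s, ε (u i) • v i = x ∧ ∑ i ∈ s, ε (v i) • u i = x))
    (hBone : ∀ x : A, B x 1 = ε x)
    (p : A)
    (hprim : Δ p = p ⊗ₜ[ℤ] 1 + 1 ⊗ₜ[ℤ] p)
    (hpp : B p p = 1)
    (D : A →ₗ[ℤ] A)
    (hD : ∀ x y, B (D x) y = B x (p * y)) :
    D ∘ₗ LinearMap.mulLeft ℤ p - LinearMap.mulLeft ℤ p ∘ₗ D =
      LinearMap.id :=
  psh_primitive_heisenberg_relation_general A B hsymm hnd Δ hcompat ε hBone p hprim hpp D hD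
end

section
/- Let Λ = ⊕_n K_0(Rep(S_n)) with multiplication by induction and comultiplication by restriction: Δ[V] = Σ_{i+j=n} [Res_{S_i × S_j}^{S_n} V] for V ∈ Rep(S_n). Then Δ is an algebra homomorphism; equivalently, the Mackey formula for the pair of subgroups S_m × S_n and S_i × S_j in S_{m+n} yields the bialgebra compatibility Δ(xy) = Δ(x)Δ(y). -/
open Equiv

/-!
STATEMENT 18: In `Λ = ⊕_n K₀(Rep(S_n))`, with multiplication by induction and
comultiplication by restriction, `Δ` is an algebra homomorphism: the Mackey
double-coset formula for the subgroups `S_i × S_j` and `S_m × S_n` of `S_{m+n}`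
gives the bialgebra compatibility `Δ(x·y) = Δ(x)·Δ(y)`.  We formalize this at
the level of (virtual) characters, which determine `K₀`: for class functions
`x` on `S_m`, `y` on `S_n` and any `i + j = m + n`, the restriction to
`S_i × S_j` of the class function induced from `x ⊠ y` on `S_m × S_n` equals
the sum over `a + b = i`, `c + d = j`, `a + c = m`, `b + d = n` of the
functions induced from `(S_a × S_b) × (S_c × S_d)` of the correspondingly
shuffled restrictions of `x` and `y`.
-/

/-- Transport of permutations along an equivalence, as a group homomorphism. -/
def permHom {α γ : Type*} (e : α ≃ γ) : Equiv.Perm α →* Equiv.Perm γ :=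
  MonoidHom.mk' (fun p => e.permCongr p) (by
    intro p q; ext z; simp [Equiv.permCongr_apply, Equiv.Perm.mul_apply])

/-- The block embedding `S_a × S_b →* S_c` associated to an identification
`Fin a ⊕ Fin b ≃ Fin c` of the underlying sets. -/
def blockEmb {a b c : ℕ} (e : Fin a ⊕ Fin b ≃ Fin c) :
    Equiv.Perm (Fin a) × Equiv.Perm (Fin b) →* Equiv.Perm (Fin c) :=
  (permHom e).comp (Equiv.Perm.sumCongrHom (Fin a) (Fin b))

/-- A class function: invariant under conjugation. -/
def IsClassFun {G : Type*} [Group G] (f : G → ℂ) : Prop :=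
  ∀ g h : G, f (h * g * h⁻¹) = f g

/-- The induced class function along `φ : H →* G`. -/
noncomputable def indCF {H G : Type*} [Group H] [Group G] [Fintype H] [Fintype G]
    (φ : H →* G) (f : H → ℂ) : G → ℂ :=
  fun g => (Fintype.card H : ℂ)⁻¹ * ∑ x : G, Function.extend (⇑φ) f 0 (x * g * x⁻¹)

/-!
Restricting `Ind_H^G` with `G = S_{m+n}`, `H = S_m × S_n` to `K = S_i × S_j` is computed by
Mackey's formula: `G` is the disjoint union of double cosets `K t H`, and the map
`(k, η) ↦ k t η` from `K × H` onto `K t H` has fibres in bijection with `K ∩ t H t⁻¹`, which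
turns the sum over `G` defining the induced class function into one induced class function from
`K ∩ t H t⁻¹` per double coset.

Viewing a permutation of `Fin (m + n)` as a bijection `β : Fin m ⊕ Fin n ≃ Fin i ⊕ Fin j`,
left and right multiplication by the Young subgroups become post- and pre-composition with block
permutations, so the double coset of `β` is determined by the number `a` of elements of `Fin m`
that `β` sends into `Fin i`. A representative is the shuffle matching blocks of sizes `a`,
`i - a`, `m - a`, `n - (i - a)`, and its stabilizer is the Young subgroup
`(S_a × S_{i-a}) × (S_{m-a} × S_{n-(i-a)})`, embedded in `S_m × S_n` with its factors paired
crosswise.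
-/

open Sum

lemma Equiv.Perm.exists_sumCongr_eq_of_isLeft {α β : Type*} [Finite α] [Finite β]
    (σ : Perm (α ⊕ β)) (h : ∀ a, (σ (inl a)).isLeft) : ∃ p q, sumCongr p q = σ := by
  obtain ⟨⟨p, q⟩, hpq⟩ := Perm.mem_sumCongrHom_range_of_perm_mapsTo_inl (σ := σ) <| by
    rintro _ ⟨a, rfl⟩
    exact (isLeft_iff.mp (h a)).imp fun _ h => h.symm
  exact ⟨p, q, hpq⟩

lemma Equiv.exists_permCongr_sumCongr_eq {α β γ : Type*} [Finite α] [Finite β] (e : α ⊕ β ≃ γ)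
    (σ : Perm γ) (h : ∀ a, (e.symm (σ (e (inl a)))).isLeft) :
    ∃ p q, e.permCongr (sumCongr p q) = σ := by
  obtain ⟨p, q, hpq⟩ := Perm.exists_sumCongr_eq_of_isLeft (e.symm.permCongr σ) h
  exact ⟨p, q, by ext; simp [show sumCongr p q = _ from hpq]⟩

lemma Equiv.Perm.exists_apply_iff_of_card_eq {α : Type*} [Fintype α] (P Q : α → Prop)
    [DecidablePred P] [DecidablePred Q] (h : Fintype.card {z // Q z} = Fintype.card {z // P z}) :
    ∃ p : Perm α, ∀ z, P (p z) ↔ Q z := by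
  let e := Fintype.equivOfCardEq h
  refine ⟨e.extendSubtype, fun z => ?_⟩
  by_cases hz : Q z
  · exact iff_of_true (e.extendSubtype_mem z hz) hz
  · exact iff_of_false (e.extendSubtype_not_mem z hz) hz

section LeftCount

variable {M N I J : Type*} [Fintype M]

/-- The size of `M ∩ β⁻¹(I)`; it classifies the double cosets `(S_I × S_J) β (S_M × S_N)`. -/
def leftCount (β : M ⊕ N ≃ I ⊕ J) : ℕ :=
  Fintype.card {z : M // (β (inl z)).isLeft}

lemma leftCount_sumCongr_trans_trans (β : M ⊕ N ≃ I ⊕ J) (k : Perm I × Perm J)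
    (η : Perm M × Perm N) :
    leftCount ((sumCongr η.1 η.2).trans (β.trans (sumCongr k.1 k.2))) = leftCount β :=
  Fintype.card_congr <| subtypeEquiv η.1 fun z => by simp

variable [Fintype N] [Fintype I]

lemma leftCount_add_card_inr (β : M ⊕ N ≃ I ⊕ J) :
    leftCount β + Fintype.card {z : N // (β (inr z)).isLeft} = Fintype.card I := by
  rw [leftCount, ← Fintype.card_sum,
    ← Fintype.card_congr (subtypeSum (p := fun s => (β s).isLeft))]
  exact Fintype.card_congr ((subtypeEquiv β fun _ => Iff.rfl).trans sumIsLeft)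

lemma leftCount_bounds [Fintype J] (β : M ⊕ N ≃ I ⊕ J) :
    leftCount β ≤ Fintype.card I ∧ leftCount β ≤ Fintype.card M ∧
      Fintype.card I - leftCount β ≤ Fintype.card N ∧
      Fintype.card M - leftCount β ≤ Fintype.card J := by
  have hI := leftCount_add_card_inr β
  have hJ := leftCount_add_card_inr (β.trans (sumComm I J))
  have hM : leftCount (β.trans (sumComm I J)) = Fintype.card M - leftCount β := by
    rw [leftCount, leftCount, ← Fintype.card_subtype_compl]
    exact Fintype.card_congr (subtypeEquivRight fun z => by simp)
  have : leftCount β ≤ Fintype.card M := Fintype.card_subtype_le _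
  have := Fintype.card_subtype_le fun z : N => (β (inr z)).isLeft
  have := Fintype.card_subtype_le fun z : N => ((β.trans (sumComm I J)) (inr z)).isLeft
  omega

lemma exists_sumCongr_trans_trans_eq_iff [Fintype J] (β β' : M ⊕ N ≃ I ⊕ J) :
    (∃ (k : Perm I × Perm J) (η : Perm M × Perm N),
      (sumCongr η.1 η.2).trans (β'.trans (sumCongr k.1 k.2)) = β) ↔
      leftCount β = leftCount β' := by
  refine ⟨fun ⟨k, η, h⟩ => h ▸ leftCount_sumCongr_trans_trans β' k η, fun h => ?_⟩
  have hN : Fintype.card {z : N // (β' (inr z)).isLeft} =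
      Fintype.card {z : N // (β (inr z)).isLeft} := by
    have := leftCount_add_card_inr β
    have := leftCount_add_card_inr β'
    omega
  obtain ⟨p, hp⟩ := Perm.exists_apply_iff_of_card_eq (fun z => (β (inl z)).isLeft)
    (fun z => (β' (inl z)).isLeft) h.symm
  obtain ⟨q, hq⟩ := Perm.exists_apply_iff_of_card_eq (fun z => (β (inr z)).isLeft)
    (fun z => (β' (inr z)).isLeft) hN
  obtain ⟨k₁, k₂, hk⟩ :=
    Perm.exists_sumCongr_eq_of_isLeft (β'.symm.trans ((sumCongr p q).trans β)) fun u => by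
      have hs : (β' (β'.symm (inl u))).isLeft := by simp
      rw [trans_apply, trans_apply]
      generalize β'.symm (inl u) = s at hs
      rcases s with z | z
      · simpa using (hp z).2 hs
      · simpa using (hq z).2 hs
  refine ⟨(k₁, k₂), (p⁻¹, q⁻¹), ?_⟩
  ext s
  simp [hk]

end LeftCount

section Shuffle

variable {A B C D I J M N : Type*} (eI : A ⊕ B ≃ I) (eJ : C ⊕ D ≃ J) (eM : A ⊕ C ≃ M)
  (eN : B ⊕ D ≃ N)

/-- The blocks `A, B, C, D` play the roles of `M ∩ I, N ∩ I, M ∩ J, N ∩ J`. -/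
def sumShuffle : M ⊕ N ≃ I ⊕ J :=
  (sumCongr eM.symm eN.symm).trans ((sumSumSumComm A C B D).trans (sumCongr eI eJ))

@[simp]
lemma sumShuffle_inl_inl (a : A) :
    sumShuffle eI eJ eM eN (inl (eM (inl a))) = inl (eI (inl a)) := by
  simp [sumShuffle, sumSumSumComm]

@[simp]
lemma sumShuffle_inl_inr (c : C) :
    sumShuffle eI eJ eM eN (inl (eM (inr c))) = inr (eJ (inl c)) := by
  simp [sumShuffle, sumSumSumComm]

@[simp]
lemma sumShuffle_inr_inl (b : B) :
    sumShuffle eI eJ eM eN (inr (eN (inl b))) = inl (eI (inr b)) := by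
  simp [sumShuffle, sumSumSumComm]

@[simp]
lemma sumShuffle_inr_inr (d : D) :
    sumShuffle eI eJ eM eN (inr (eN (inr d))) = inr (eJ (inr d)) := by
  simp [sumShuffle, sumSumSumComm]

lemma sumShuffle_trans_sumCongr (p₁ : Perm A) (p₂ : Perm B) (p₃ : Perm C) (p₄ : Perm D) :
    (sumShuffle eI eJ eM eN).trans
        (sumCongr (eI.permCongr (sumCongr p₁ p₂)) (eJ.permCongr (sumCongr p₃ p₄))) =
      (sumCongr (eM.permCongr (sumCongr p₁ p₃)) (eN.permCongr (sumCongr p₂ p₄))).trans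
        (sumShuffle eI eJ eM eN) := by
  ext (x | x)
  · obtain ⟨a | c, rfl⟩ := eM.surjective x <;> simp
  · obtain ⟨b | d, rfl⟩ := eN.surjective x <;> simp

lemma leftCount_sumShuffle [Fintype A] [Fintype C] [Fintype M] :
    leftCount (sumShuffle eI eJ eM eN) = Fintype.card A := by
  rw [leftCount, ← Fintype.card_congr (sumIsLeft (α := A) (β := C))]
  refine Fintype.card_congr (subtypeEquiv eM.symm fun x => ?_)
  obtain ⟨a | c, rfl⟩ := eM.surjective x <;> simp

lemma exists_permCongr_of_sumShuffle_trans_sumCongr [Finite A] [Finite B] [Finite C] [Finite D]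
    {k₁ : Perm I} {k₂ : Perm J} {η₁ : Perm M} {η₂ : Perm N}
    (h : (sumShuffle eI eJ eM eN).trans (sumCongr k₁ k₂) =
      (sumCongr η₁ η₂).trans (sumShuffle eI eJ eM eN)) :
    (∃ p₁ p₂, eI.permCongr (sumCongr p₁ p₂) = k₁) ∧
      ∃ p₃ p₄, eJ.permCongr (sumCongr p₃ p₄) = k₂ := by
  constructor
  · refine eI.exists_permCongr_sumCongr_eq k₁ fun a => ?_
    have := Equiv.ext_iff.1 h (inl (eM (inl a)))
    obtain ⟨a' | c', hx⟩ := eM.surjective (η₁ (eM (inl a))) <;>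
      simp only [trans_apply, sumCongr_apply, map_inl, sumShuffle_inl_inl, ← hx,
        sumShuffle_inl_inr, inl.injEq, reduceCtorEq] at this
    simp [this]
  · refine eJ.exists_permCongr_sumCongr_eq k₂ fun c => ?_
    have := Equiv.ext_iff.1 h (inl (eM (inr c)))
    obtain ⟨a' | c', hx⟩ := eM.surjective (η₁ (eM (inr c))) <;>
      simp only [trans_apply, sumCongr_apply, map_inl, sumShuffle_inl_inl, ← hx,
        sumShuffle_inl_inr, map_inr, inr.injEq, reduceCtorEq] at this
    simp [this]

end Shuffle

section Mackey

variable {G H K : Type*} [Group G] [Group H] [Group K]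

lemma extend_conj_of_isClassFun {φ : H →* G} (hφ : Function.Injective φ) {f : H → ℂ}
    (hf : IsClassFun f) (η : H) (u : G) :
    Function.extend φ f 0 (φ η * u * (φ η)⁻¹) = Function.extend φ f 0 u := by
  by_cases hu : ∃ h, φ h = u
  · obtain ⟨h, rfl⟩ := hu
    rw [← map_inv, ← map_mul, ← map_mul, hφ.extend_apply, hφ.extend_apply, hf]
  · have hu' : ¬∃ h, φ h = φ η * u * (φ η)⁻¹ := fun ⟨h, hh⟩ =>
      hu ⟨η⁻¹ * h * η, by simp [hh, mul_assoc]⟩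
    rw [Function.extend_apply' _ _ _ hu, Function.extend_apply' _ _ _ hu']
    rfl

lemma indCF_apply_eq_sum_inv [Fintype G] [Fintype H] (φ : H →* G) (f : H → ℂ) (g : G) :
    indCF φ f g = (Fintype.card H : ℂ)⁻¹ * ∑ x : G, Function.extend φ f 0 (x⁻¹ * g * x) := by
  rw [indCF, ← Equiv.sum_comp (Equiv.inv G)]
  simp

variable {D : Type*} [Group D] {φ : H →* G} {ψ : K →* G} {χ : D →* K} {θ : D →* H} {t : G}

lemma extend_conj_eq_extend_comp (hφ : Function.Injective φ) (hχ : Function.Injective χ)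
    (hcomm : ∀ d, ψ (χ d) * t = t * φ (θ d))
    (hrange : ∀ k η, ψ k * t = t * φ η → ∃ d, χ d = k) (f : H → ℂ) (k : K) :
    Function.extend φ f 0 (t⁻¹ * ψ k * t) = Function.extend χ (f ∘ θ) 0 k := by
  by_cases hk : ∃ d, χ d = k
  · obtain ⟨d, rfl⟩ := hk
    rw [mul_assoc, hcomm, inv_mul_cancel_left, hφ.extend_apply, hχ.extend_apply,
      Function.comp_apply]
  · have hk' : ¬∃ η, φ η = t⁻¹ * ψ k * t := fun ⟨η, hη⟩ =>
      hk (hrange k η (by rw [hη]; group))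
    rw [Function.extend_apply' _ _ _ hk, Function.extend_apply' _ _ _ hk']
    rfl

lemma sum_prod_eq_card_mul_sum_doubleCoset [Fintype G] [Fintype H] [Fintype K] [Fintype D]
    (hφ : Function.Injective φ) (hχ : Function.Injective χ) (hcomm : ∀ d, ψ (χ d) * t = t * φ (θ d))
    (hrange : ∀ k η, ψ k * t = t * φ η → ∃ d, χ d = k) {p : G → Prop} [DecidablePred p]
    (hp : ∀ w, p w ↔ ∃ k η, ψ k * t * φ η = w) (g : G → ℂ) :
    ∑ q : K × H, g (ψ q.1 * t * φ q.2) = Fintype.card D * ∑ w : {w // p w}, g w := by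
  choose k₀ η₀ hk₀ using fun w : {w // p w} => (hp w).1 w.2
  let Ξ : {w // p w} × D → K × H := fun x => (k₀ x.1 * χ x.2, (θ x.2)⁻¹ * η₀ x.1)
  have hΞ : ∀ x, ψ (Ξ x).1 * t * φ (Ξ x).2 = x.1 := fun ⟨w, d⟩ => by
    calc ψ (k₀ w * χ d) * t * φ ((θ d)⁻¹ * η₀ w)
        = ψ (k₀ w) * (ψ (χ d) * t) * (φ (θ d))⁻¹ * φ (η₀ w) := by simp [mul_assoc]
      _ = w := by rw [hcomm, ← hk₀ w]; group
  have hΞ_bij : Function.Bijective Ξ := by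
    refine ⟨fun ⟨w, d⟩ ⟨w', d'⟩ h => ?_, fun ⟨k, η⟩ => ?_⟩
    · obtain rfl : w = w' := Subtype.ext <| by rw [← hΞ (w, d), ← hΞ (w', d'), h]
      obtain rfl : d = d' := hχ (mul_left_cancel (congrArg Prod.fst h))
      rfl
    · let w : {w // p w} := ⟨ψ k * t * φ η, (hp _).2 ⟨k, η, rfl⟩⟩
      have hw : ψ ((k₀ w)⁻¹ * k) * t = t * φ (η₀ w * η⁻¹) :=
        calc ψ ((k₀ w)⁻¹ * k) * t = (ψ (k₀ w))⁻¹ * (ψ k * t * φ η) * (φ η)⁻¹ := by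
              simp only [map_mul, map_inv]; group
          _ = (ψ (k₀ w))⁻¹ * (ψ (k₀ w) * t * φ (η₀ w)) * (φ η)⁻¹ := by rw [hk₀ w]
          _ = t * φ (η₀ w * η⁻¹) := by simp only [map_mul, map_inv]; group
      obtain ⟨d, hd⟩ := hrange _ _ hw
      refine ⟨(w, d), Prod.ext (by simp [Ξ, hd]) ?_⟩
      have hθ : θ d = η₀ w * η⁻¹ := hφ (mul_left_cancel ((hcomm d).symm.trans (hd ▸ hw)))
      simp [Ξ, hθ]
  rw [← Equiv.sum_comp (Equiv.ofBijective Ξ hΞ_bij), Fintype.sum_prod_type_right]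
  simp only [Equiv.ofBijective_apply, hΞ, Finset.sum_const, Finset.card_univ, nsmul_eq_mul,
    Finset.mul_sum]

lemma sum_extend_conj_eq_card_mul_sum_extend [Fintype H] [Fintype K] (hφ : Function.Injective φ)
    (hχ : Function.Injective χ) (hcomm : ∀ d, ψ (χ d) * t = t * φ (θ d))
    (hrange : ∀ k η, ψ k * t = t * φ η → ∃ d, χ d = k) {f : H → ℂ} (hf : IsClassFun f)
    (κ : K) :
    ∑ q : K × H, Function.extend φ f 0
        ((ψ q.1 * t * φ q.2)⁻¹ * ψ κ * (ψ q.1 * t * φ q.2)) =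
      Fintype.card H * ∑ k : K, Function.extend χ (f ∘ θ) 0 (k⁻¹ * κ * k) := by
  have hconj : ∀ (k : K) (η : H), (ψ k * t * φ η)⁻¹ * ψ κ * (ψ k * t * φ η) =
      φ η⁻¹ * (t⁻¹ * ψ (k⁻¹ * κ * k) * t) * (φ η⁻¹)⁻¹ := by
    intro k η; simp only [map_mul, map_inv]; group
  simp only [hconj, extend_conj_of_isClassFun hφ hf,
    extend_conj_eq_extend_comp hφ hχ hcomm hrange, Fintype.sum_prod_type, Finset.sum_const,
    Finset.card_univ, nsmul_eq_mul, Finset.mul_sum]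

end Mackey

/-- `c` labels the double cosets `ψ K * t a * φ H`, and `χ a`, `θ a` identify `D a` with
`ψ K ∩ t a * φ H * (t a)⁻¹` and with its conjugate in `H`. -/
theorem mackey_formula {G H K ι : Type*} [Group G] [Group H] [Group K] [Fintype G] [Fintype H]
    [Fintype K] [Fintype ι] [DecidableEq ι] {D : ι → Type*} [∀ a, Group (D a)]
    [∀ a, Fintype (D a)] {φ : H →* G} {ψ : K →* G} {χ : ∀ a, D a →* K} {θ : ∀ a, D a →* H}
    {c : G → ι} {t : ι → G} (hφ : Function.Injective φ) (hχ : ∀ a, Function.Injective (χ a))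
    (hc : ∀ w a, c w = a ↔ ∃ k η, ψ k * t a * φ η = w)
    (hcomm : ∀ a d, ψ (χ a d) * t a = t a * φ (θ a d))
    (hrange : ∀ a k η, ψ k * t a = t a * φ η → ∃ d, χ a d = k) {f : H → ℂ}
    (hf : IsClassFun f) (κ : K) :
    indCF φ f (ψ κ) = ∑ a, indCF (χ a) (f ∘ θ a) κ := by
  rw [indCF_apply_eq_sum_inv, ← Fintype.sum_fiberwise c, Finset.mul_sum]
  refine Finset.sum_congr rfl fun a _ => ?_
  have hcount := sum_prod_eq_card_mul_sum_doubleCoset hφ (hχ a) (hcomm a) (hrange a)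
    (fun w => hc w a) fun w => Function.extend φ f 0 (w⁻¹ * ψ κ * w)
  rw [sum_extend_conj_eq_card_mul_sum_extend hφ (hχ a) (hcomm a) (hrange a) hf] at hcount
  rw [indCF_apply_eq_sum_inv]
  have hH : (Fintype.card H : ℂ) ≠ 0 := Nat.cast_ne_zero.2 Fintype.card_ne_zero
  have hD : (Fintype.card (D a) : ℂ) ≠ 0 := Nat.cast_ne_zero.2 Fintype.card_ne_zero
  field_simp
  linear_combination -hcount

lemma IsClassFun.mul_fst_snd {G₁ G₂ : Type*} [Group G₁] [Group G₂] {x : G₁ → ℂ} {y : G₂ → ℂ}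
    (hx : IsClassFun x) (hy : IsClassFun y) : IsClassFun fun q : G₁ × G₂ => x q.1 * y q.2 :=
  fun g h => by
    simp only [Prod.fst_mul, Prod.snd_mul, Prod.fst_inv, Prod.snd_inv]
    rw [hx, hy]

section BlockEmb

variable {a b c d x : ℕ}

lemma blockEmb_injective (e : Fin a ⊕ Fin b ≃ Fin c) : Function.Injective (blockEmb e) :=
  fun _ _ h => Perm.sumCongrHom_injective (e.permCongr.injective h)

variable (e₁ : Fin a ⊕ Fin b ≃ Fin x) (e₂ : Fin c ⊕ Fin d ≃ Fin x)
  (β : Fin a ⊕ Fin b ≃ Fin c ⊕ Fin d)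

lemma equivCongr_trans_sumCongrHom (k : Perm (Fin c) × Perm (Fin d)) :
    e₁.equivCongr e₂ (β.trans (Perm.sumCongrHom _ _ k)) =
      blockEmb e₂ k * e₁.equivCongr e₂ β := by
  ext; simp [blockEmb, permHom, Perm.mul_apply]

lemma equivCongr_sumCongrHom_trans (η : Perm (Fin a) × Perm (Fin b)) :
    e₁.equivCongr e₂ ((Perm.sumCongrHom _ _ η).trans β) =
      e₁.equivCongr e₂ β * blockEmb e₁ η := by
  ext; simp [blockEmb, permHom, Perm.mul_apply]

end BlockEmb

section YoungSubgroups

variable {m n i j : ℕ}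

/-- The possible values `a` of `leftCount` on `Fin m ⊕ Fin n ≃ Fin i ⊕ Fin j`. -/
def shuffleIndex (m n i j : ℕ) : Finset ℕ :=
  {a ∈ Finset.range (i + 1) | a ≤ i ∧ a ≤ m ∧ i - a ≤ n ∧ m - a ≤ j}

lemma mem_shuffleIndex {a : ℕ} :
    a ∈ shuffleIndex m n i j ↔ a ≤ i ∧ a ≤ m ∧ i - a ≤ n ∧ m - a ≤ j := by
  simp only [shuffleIndex, Finset.mem_filter, Finset.mem_range, and_iff_right_iff_imp]
  omega

variable (hij : i + j = m + n) (a : shuffleIndex m n i j)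

def shuffleEquivI : Fin a ⊕ Fin (i - a) ≃ Fin i :=
  finSumFinEquiv.trans (finCongr (Nat.add_sub_cancel' (mem_shuffleIndex.1 a.2).1))

def shuffleEquivJ : Fin (m - a) ⊕ Fin (n - (i - a)) ≃ Fin j :=
  finSumFinEquiv.trans (finCongr (by have := mem_shuffleIndex.1 a.2; omega))

def shuffleEquivM : Fin a ⊕ Fin (m - a) ≃ Fin m :=
  finSumFinEquiv.trans (finCongr (Nat.add_sub_cancel' (mem_shuffleIndex.1 a.2).2.1))

def shuffleEquivN : Fin (i - a) ⊕ Fin (n - (i - a)) ≃ Fin n :=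
  finSumFinEquiv.trans (finCongr (Nat.add_sub_cancel' (mem_shuffleIndex.1 a.2).2.2.1))

def youngEquiv : (Fin m ⊕ Fin n ≃ Fin i ⊕ Fin j) ≃ Perm (Fin (m + n)) :=
  finSumFinEquiv.equivCongr (finSumFinEquiv.trans (finCongr hij))

abbrev ShuffleGroup : Type :=
  (Perm (Fin a) × Perm (Fin (i - a))) × (Perm (Fin (m - a)) × Perm (Fin (n - (i - a))))

def shuffleRep : Perm (Fin (m + n)) :=
  youngEquiv hij (sumShuffle (shuffleEquivI a) (shuffleEquivJ hij a) (shuffleEquivM a)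
    (shuffleEquivN a))

def shuffleHomIJ : ShuffleGroup a →* Perm (Fin i) × Perm (Fin j) :=
  (blockEmb (shuffleEquivI a)).prodMap (blockEmb (shuffleEquivJ hij a))

def shuffleHomMN : ShuffleGroup a →* Perm (Fin m) × Perm (Fin n) :=
  ((blockEmb (shuffleEquivM a)).prodMap (blockEmb (shuffleEquivN a))).comp
    (MulEquiv.prodProdProdComm _ _ _ _).toMonoidHom

def shuffleClass (w : Perm (Fin (m + n))) : shuffleIndex m n i j :=
  ⟨leftCount ((youngEquiv hij).symm w), mem_shuffleIndex.2 <| by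
    simpa only [Fintype.card_fin] using leftCount_bounds ((youngEquiv hij).symm w)⟩

lemma shuffleClass_eq_iff (w : Perm (Fin (m + n))) :
    shuffleClass hij w = a ↔ ∃ k η, blockEmb (finSumFinEquiv.trans (finCongr hij)) k *
      shuffleRep hij a * blockEmb finSumFinEquiv η = w := by
  rw [← Subtype.coe_inj,
    show (shuffleClass hij w : ℕ) = leftCount ((youngEquiv hij).symm w) from rfl,
    ← Fintype.card_fin a, ← leftCount_sumShuffle (shuffleEquivI a) (shuffleEquivJ hij a)
      (shuffleEquivM a) (shuffleEquivN a), ← exists_sumCongr_trans_trans_eq_iff]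
  simp only [Equiv.eq_symm_apply, shuffleRep, youngEquiv, ← equivCongr_trans_sumCongrHom,
    ← equivCongr_sumCongrHom_trans, Perm.sumCongrHom_apply]

lemma blockEmb_shuffleHomIJ_mul_shuffleRep (d : ShuffleGroup a) :
    blockEmb (finSumFinEquiv.trans (finCongr hij)) (shuffleHomIJ hij a d) * shuffleRep hij a =
      shuffleRep hij a * blockEmb finSumFinEquiv (shuffleHomMN a d) := by
  rw [shuffleRep, youngEquiv, ← equivCongr_trans_sumCongrHom, ← equivCongr_sumCongrHom_trans]
  exact congrArg _ (sumShuffle_trans_sumCongr _ _ _ _ _ _ _ _)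

lemma exists_shuffleHomIJ_eq (k : Perm (Fin i) × Perm (Fin j))
    (η : Perm (Fin m) × Perm (Fin n))
    (h : blockEmb (finSumFinEquiv.trans (finCongr hij)) k * shuffleRep hij a =
      shuffleRep hij a * blockEmb finSumFinEquiv η) :
    ∃ d, shuffleHomIJ hij a d = k := by
  rw [shuffleRep, youngEquiv, ← equivCongr_trans_sumCongrHom,
    ← equivCongr_sumCongrHom_trans] at h
  obtain ⟨⟨p₁, p₂, h₁⟩, p₃, p₄, h₂⟩ := exists_permCongr_of_sumShuffle_trans_sumCongr _ _ _ _
    (by simpa only [Perm.sumCongrHom_apply] using (Equiv.injective _ h))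
  exact ⟨((p₁, p₂), (p₃, p₄)), Prod.ext h₁ h₂⟩

end YoungSubgroups

theorem mackey_bialgebra_compatibility (m n i j : ℕ) (hij : i + j = m + n)
    (x : Equiv.Perm (Fin m) → ℂ) (y : Equiv.Perm (Fin n) → ℂ)
    (hx : IsClassFun x) (hy : IsClassFun y) :
    ∀ (g : Equiv.Perm (Fin i)) (h : Equiv.Perm (Fin j)),
      indCF (blockEmb (finSumFinEquiv : Fin m ⊕ Fin n ≃ Fin (m + n)))
          (fun q => x q.1 * y q.2)
          (blockEmb (finSumFinEquiv.trans (finCongr hij)) (g, h)) =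
        ∑ a ∈ Finset.range (i + 1),
          if hc : a ≤ i ∧ a ≤ m ∧ i - a ≤ n ∧ m - a ≤ j then
            indCF
              ((blockEmb ((finSumFinEquiv :
                  Fin a ⊕ Fin (i - a) ≃ Fin (a + (i - a))).trans
                    (finCongr (by omega)))).prodMap
                (blockEmb ((finSumFinEquiv :
                  Fin (m - a) ⊕ Fin (n - (i - a)) ≃
                    Fin ((m - a) + (n - (i - a)))).trans (finCongr (by omega)))))
              (fun q =>
                x (blockEmb ((finSumFinEquiv :
                      Fin a ⊕ Fin (m - a) ≃ Fin (a + (m - a))).trans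
                        (finCongr (by omega))) (q.1.1, q.2.1)) *
                y (blockEmb ((finSumFinEquiv :
                      Fin (i - a) ⊕ Fin (n - (i - a)) ≃
                        Fin ((i - a) + (n - (i - a)))).trans
                        (finCongr (by omega))) (q.1.2, q.2.2)))
              (g, h)
          else 0 := by
  intro g h
  rw [mackey_formula (χ := shuffleHomIJ hij) (θ := shuffleHomMN) (blockEmb_injective _)
    (fun a => (blockEmb_injective _).prodMap (blockEmb_injective _))
    (fun w a => shuffleClass_eq_iff hij a w) (blockEmb_shuffleHomIJ_mul_shuffleRep hij)
    (exists_shuffleHomIJ_eq hij) (hx.mul_fst_snd hy) (g, h), Finset.sum_dite]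
  simp only [Finset.sum_const_zero, add_zero]
  rfl
end
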